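/- arXiv:math/0006056 — 2 statements merged into one kernel-verified Lean document; each statement's English description precedes it below -/
import Mathlib

section
/- As an abelian group, A_m is free of rank 4m+1, with basis the images of the 4m+1 paths (0), (1), …, (m), (0|1), …, (m−1|m), (1|0), …, (m|m−1), (1|0|1), …, (m|m−1|m). Moreover, with respect to the grading of A_m determined by deg(i) = deg(i|i+1) = 0 and deg(i+1|i) = 1, the homogeneous component of degree 0 is free abelian of rank 2m+1 with basis (0),…,(m),(0|1),…,(m−1|m), the component of degree 1 is free abelian of rank 2m with basis (1|0),…,(m|m−1),(1|0|1),…,(m|m−1|m), and all components of degree ≥ 2 are zero. -/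
noncomputable section

open scoped TensorProduct

/-- Generators for the path ring of the quiver `Γ_m`: vertex idempotents `e i`
(the length-zero paths `(i)`), and the arrows `u i = (i|i+1)` and `d i = (i+1|i)`. -/
inductive AmGen : Type
  | e : ℕ → AmGen
  | u : ℕ → AmGen
  | d : ℕ → AmGen

/-- The free ring on the generators. -/
abbrev FA : Type := FreeAlgebra ℤ AmGen

def ge (i : ℕ) : FA := FreeAlgebra.ι ℤ (AmGen.e i)
def gu (i : ℕ) : FA := FreeAlgebra.ι ℤ (AmGen.u i)
def gd (i : ℕ) : FA := FreeAlgebra.ι ℤ (AmGen.d i)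

/-- The relations presenting the ring `A_m` as a quotient of the path ring of `Γ_m`:
first the relations presenting the path ring itself (the `(i)` are orthogonal idempotents
summing to `1`, arrows compose only when endpoints match, generators with out-of-range
indices vanish), and then the defining relations of `A_m`:
`(i-1|i|i+1) = (i+1|i|i-1) = 0`, `(i|i+1|i) = (i|i-1|i)` for `0 < i < m`, and `(0|1|0) = 0`. -/
inductive AmRel (m : ℕ) : FA → FA → Prop
  | idem (i : ℕ) : AmRel m (ge i * ge i) (ge i)
  | orth (i j : ℕ) : i ≠ j → AmRel m (ge i * ge j) 0
  | sum_one : AmRel m (∑ i ∈ Finset.range (m + 1), ge i) 1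
  | e_zero (i : ℕ) : m < i → AmRel m (ge i) 0
  | u_zero (i : ℕ) : m ≤ i → AmRel m (gu i) 0
  | d_zero (i : ℕ) : m ≤ i → AmRel m (gd i) 0
  | u_src (i : ℕ) : AmRel m (ge i * gu i) (gu i)
  | u_tgt (i : ℕ) : AmRel m (gu i * ge (i + 1)) (gu i)
  | d_src (i : ℕ) : AmRel m (ge (i + 1) * gd i) (gd i)
  | d_tgt (i : ℕ) : AmRel m (gd i * ge i) (gd i)
  | uu (i : ℕ) : AmRel m (gu i * gu (i + 1)) 0
  | dd (i : ℕ) : AmRel m (gd (i + 1) * gd i) 0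
  | loops (i : ℕ) : i + 1 < m → AmRel m (gu (i + 1) * gd (i + 1)) (gd i * gu i)
  | loop0 : AmRel m (gu 0 * gd 0) 0

/-- The ring `A_m`. -/
abbrev Am (m : ℕ) : Type := RingQuot (AmRel m)

/-- Quotient map from the free ring. -/
def toAm (m : ℕ) : FA →+* Am m := RingQuot.mkRingHom (AmRel m)

/-- The image of the length-zero path `(i)` in `A_m`. -/
def eA (m i : ℕ) : Am m := toAm m (ge i)
/-- The image of the path `(i|i+1)` in `A_m`. -/
def uA (m i : ℕ) : Am m := toAm m (gu i)
/-- The image of the path `(i+1|i)` in `A_m`. -/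
def dA (m i : ℕ) : Am m := toAm m (gd i)
/-- The image of the path `(i|i-1|i)` in `A_m` (for `i ≥ 1`). -/
def loopA (m i : ℕ) : Am m := dA m (i - 1) * uA m (i - 1)

/-- The left `A_m`-module `P_i = A_m (i)`. -/
def Pmod (m i : ℕ) : Submodule (Am m) (Am m) := Submodule.span (Am m) {eA m i}

/-- The right `A_m`-module `₍i₎P = (i) A_m`. -/
def iPmod (m i : ℕ) : Submodule (Am m)ᵐᵒᵖ (Am m) := Submodule.span (Am m)ᵐᵒᵖ {eA m i}

end
noncomputable section

/-- The `4m+1` distinguished elements of `A_m`: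
`(0), …, (m)`, `(0|1), …, (m-1|m)`, `(1|0), …, (m|m-1)`, `(1|0|1), …, (m|m-1|m)`. -/
def amBasisFam (m : ℕ) : (Fin (m + 1) ⊕ Fin m ⊕ Fin m ⊕ Fin m) → Am m :=
  Sum.elim (fun i => eA m i)
    (Sum.elim (fun i => uA m i)
      (Sum.elim (fun i => dA m i) fun i => dA m i * uA m i))

/-- The degree-zero part: `(0), …, (m)` and `(0|1), …, (m-1|m)`. -/
def amDeg0Fam (m : ℕ) : (Fin (m + 1) ⊕ Fin m) → Am m :=
  Sum.elim (fun i => eA m i) fun i => uA m i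

/-- The degree-one part: `(1|0), …, (m|m-1)` and `(1|0|1), …, (m|m-1|m)`. -/
def amDeg1Fam (m : ℕ) : (Fin m ⊕ Fin m) → Am m :=
  Sum.elim (fun i => dA m i) fun i => dA m i * uA m i

/-!
Spanning: left multiplication by a generator `(i)`, `(i|i+1)` or `(i+1|i)` sends each basis path
to `0` or to a basis path of the expected degree, so the pieces spanned by the basis paths of each
degree add up to a graded left ideal containing `1`.

Independence: a basis path is determined by its source, target and degree, and the product of two
of them is the path with the concatenated data when there is one, and `0` otherwise. Letting the
generators act by this rule on the free abelian group on the `4m + 1` triples respects the defining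
relations (on basis vectors this is linear arithmetic), and evaluating the resulting action of
`A_m` at the image of `1` sends the basis paths to distinct basis vectors.
-/

open Submodule

theorem LinearIndependent.isInternal_span_image_preimage {ι κ R M : Type*} [Ring R]
    [AddCommGroup M] [Module R M] [DecidableEq κ] {v : ι → M} (hv : LinearIndependent R v)
    (hspan : span R (Set.range v) = ⊤) (f : ι → κ) :
    DirectSum.IsInternal fun k => span R (v '' (f ⁻¹' {k})) := by
  refine DirectSum.isInternal_submodule_of_iSupIndep_of_iSup_eq_top (fun k => ?_) ?_
  · refine (hv.disjoint_span_image (s := f ⁻¹' {k}) (t := {i | f i ≠ k})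
      (Set.disjoint_left.2 fun i hi hi' => hi' hi)).mono_right ?_
    exact iSup₂_le fun j hj => span_mono <| Set.image_mono fun i hi => by simp_all
  · refine top_le_iff.1 <| hspan ▸ span_le.2 ?_
    rintro _ ⟨i, rfl⟩
    exact mem_iSup_of_mem (f i) (subset_span ⟨i, rfl, rfl⟩)

/-- A triple `(s, t, k)` is a path of `A_m` when `A_m` has a (unique) basis path from `s` to `t`
of degree `k`. -/
def IsAmPath (m : ℕ) : ℕ × ℕ × ℕ → Prop
  | (s, t, k) =>
    s ≤ m ∧ t ≤ m ∧ (k = 0 ∧ (t = s ∨ t = s + 1) ∨ k = 1 ∧ (s = t + 1 ∨ s = t ∧ 1 ≤ s))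

instance (m : ℕ) : DecidablePred (IsAmPath m) := fun _ => by unfold IsAmPath; infer_instance

abbrev AmPath (m : ℕ) : Type := {p : ℕ × ℕ × ℕ // IsAmPath m p}

def pathVec (m : ℕ) (p : ℕ × ℕ × ℕ) : AmPath m →₀ ℤ :=
  if h : IsAmPath m p then Finsupp.single ⟨p, h⟩ 1 else 0

/-- Left multiplication by the path `(s, t, k)` on the free abelian group on the paths. -/
def pathMul (m s t k : ℕ) : Module.End ℤ (AmPath m →₀ ℤ) :=
  Finsupp.lift (AmPath m →₀ ℤ) ℤ (AmPath m) fun q =>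
    if t = q.1.1 then pathVec m (s, q.1.2.1, k + q.1.2.2) else 0

section Model

variable {m : ℕ}

lemma pathVec_of_not_isAmPath {p : ℕ × ℕ × ℕ} (h : ¬ IsAmPath m p) : pathVec m p = 0 :=
  dif_neg h

lemma pathMul_single (s t k : ℕ) (q : AmPath m) :
    pathMul m s t k (Finsupp.single q 1) =
      if t = q.1.1 ∧ IsAmPath m (s, q.1.2.1, k + q.1.2.2) then
        pathVec m (s, q.1.2.1, k + q.1.2.2) else 0 := by
  by_cases h : IsAmPath m (s, q.1.2.1, k + q.1.2.2)
  · simp [pathMul, h]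
  · simp [pathMul, h, pathVec_of_not_isAmPath]

lemma pathMul_pathVec (s t k : ℕ) (p : ℕ × ℕ × ℕ) :
    pathMul m s t k (pathVec m p) =
      if IsAmPath m p ∧ t = p.1 ∧ IsAmPath m (s, p.2.1, k + p.2.2) then
        pathVec m (s, p.2.1, k + p.2.2) else 0 := by
  by_cases hp : IsAmPath m p
  · rw [pathVec, dif_pos hp, pathMul_single]
    simp [hp]
  · simp [hp, pathVec_of_not_isAmPath]

def genPathMul (m : ℕ) : AmGen → Module.End ℤ (AmPath m →₀ ℤ)
  | .e i => pathMul m i i 0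
  | .u i => pathMul m i (i + 1) 0
  | .d i => pathMul m (i + 1) i 1

def freeRep (m : ℕ) : FA →ₐ[ℤ] Module.End ℤ (AmPath m →₀ ℤ) :=
  FreeAlgebra.lift ℤ (genPathMul m)

lemma freeRep_ge (i : ℕ) : freeRep m (ge i) = pathMul m i i 0 := by
  simp [freeRep, ge, genPathMul]

lemma freeRep_gu (i : ℕ) : freeRep m (gu i) = pathMul m i (i + 1) 0 := by
  simp [freeRep, gu, genPathMul]

lemma freeRep_gd (i : ℕ) : freeRep m (gd i) = pathMul m (i + 1) i 1 := by
  simp [freeRep, gd, genPathMul]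

lemma freeRep_eq_of_amRel {x y : FA} (h : AmRel m x y) : freeRep m x = freeRep m y := by
  ext ⟨⟨s, t, k⟩, hq⟩ : 2
  induction h with
  | sum_one =>
    simp only [map_sum, map_one, freeRep_ge, LinearMap.coe_comp, Function.comp_apply,
      Finsupp.lsingle_apply, LinearMap.sum_apply, pathMul_single, zero_add, Module.End.one_apply]
    rw [Finset.sum_eq_single_of_mem s (Finset.mem_range.2 (Nat.lt_succ_of_le hq.1))
      fun j _ hj => if_neg fun h => hj h.1, if_pos ⟨rfl, hq⟩, pathVec, dif_pos hq]
  | _ =>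
    -- both sides are nested case distinctions on linear arithmetic conditions
    simp only [map_mul, map_zero, freeRep_ge, freeRep_gu, freeRep_gd, Module.End.mul_apply,
      LinearMap.coe_comp, Function.comp_apply, Finsupp.lsingle_apply, pathMul_single, apply_ite,
      pathMul_pathVec, LinearMap.zero_apply]
    split_ifs <;> (try simp only [IsAmPath, true_and, zero_add] at *) <;> first | rfl | omega

def amRep (m : ℕ) : Am m →ₐ[ℤ] Module.End ℤ (AmPath m →₀ ℤ) :=
  RingQuot.liftAlgHom ℤ ⟨freeRep m, fun _ _ => freeRep_eq_of_amRel⟩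

lemma amRep_toAm (x : FA) : amRep m (toAm m x) = freeRep m x := by
  rw [amRep, toAm, ← RingQuot.mkAlgHom_coe ℤ, RingHom.coe_coe,
    RingQuot.liftAlgHom_mkAlgHom_apply]

lemma amRep_eA (i : ℕ) : amRep m (eA m i) = pathMul m i i 0 := by
  rw [eA, amRep_toAm, freeRep_ge]

lemma amRep_uA (i : ℕ) : amRep m (uA m i) = pathMul m i (i + 1) 0 := by
  rw [uA, amRep_toAm, freeRep_gu]

lemma amRep_dA (i : ℕ) : amRep m (dA m i) = pathMul m (i + 1) i 1 := by
  rw [dA, amRep_toAm, freeRep_gd]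

/-- The image of `1` under the regular representation, written in the path basis. -/
def unitVec (m : ℕ) : AmPath m →₀ ℤ := ∑ i ∈ Finset.range (m + 1), pathVec m (i, i, 0)

lemma pathMul_unitVec {s t k : ℕ} (h : IsAmPath m (s, t, k)) :
    pathMul m s t k (unitVec m) = pathVec m (s, t, k) := by
  have ht : t ≤ m := h.2.1
  rw [unitVec, map_sum, Finset.sum_eq_single_of_mem t (Finset.mem_range.2 (by omega)),
    pathMul_pathVec, if_pos ⟨by simp [IsAmPath, ht], rfl, h⟩]
  · rfl
  · intro j _ hj
    rw [pathMul_pathVec, if_neg fun h => hj h.2.1.symm]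

def amBasisPath (m : ℕ) : Fin (m + 1) ⊕ Fin m ⊕ Fin m ⊕ Fin m → ℕ × ℕ × ℕ :=
  Sum.elim (fun i => (i, i, 0))
    (Sum.elim (fun i => (i, i + 1, 0))
      (Sum.elim (fun i => (i + 1, i, 1)) fun i => (i + 1, i + 1, 1)))

lemma isAmPath_amBasisPath (b : Fin (m + 1) ⊕ Fin m ⊕ Fin m ⊕ Fin m) :
    IsAmPath m (amBasisPath m b) := by
  rcases b with i | i | i | i <;> simp [amBasisPath, IsAmPath, Fin.is_le]

lemma amBasisPath_injective : Function.Injective (amBasisPath m) := by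
  rintro (i | i | i | i) (j | j | j | j) h <;> simp [amBasisPath, Fin.ext_iff] at h ⊢ <;> omega

lemma amRep_amBasisFam_unitVec (b : Fin (m + 1) ⊕ Fin m ⊕ Fin m ⊕ Fin m) :
    amRep m (amBasisFam m b) (unitVec m) = pathVec m (amBasisPath m b) := by
  have hb := isAmPath_amBasisPath b
  rcases b with i | i | i | i <;>
    simp only [amBasisFam, amBasisPath, Sum.elim_inl, Sum.elim_inr, map_mul, Module.End.mul_apply,
      amRep_eA, amRep_uA, amRep_dA] at hb ⊢
  · exact pathMul_unitVec hb
  · exact pathMul_unitVec hb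
  · exact pathMul_unitVec hb
  · have hu : IsAmPath m (i, i + 1, 0) := by simp [IsAmPath]
    rw [pathMul_unitVec hu, pathMul_pathVec, if_pos ⟨hu, rfl, hb⟩]
    rfl

theorem linearIndependent_amBasisFam : LinearIndependent ℤ (amBasisFam m) := by
  let eval : Am m →ₗ[ℤ] (AmPath m →₀ ℤ) :=
    (LinearMap.applyₗ (unitVec m)).comp (amRep m).toLinearMap
  refine LinearIndependent.of_comp eval ?_
  have : ⇑eval ∘ amBasisFam m =
      (fun p : AmPath m => Finsupp.single p (1 : ℤ)) ∘
        fun b => ⟨_, isAmPath_amBasisPath b⟩ := by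
    funext b
    exact (amRep_amBasisFam_unitVec b).trans (dif_pos _)
  rw [this]
  exact (Finsupp.linearIndependent_single_one ℤ (AmPath m)).comp _
    fun b c h => amBasisPath_injective (congrArg Subtype.val h)

end Model

section Relations

variable {m : ℕ}

lemma toAm_eq_of_amRel {x y : FA} (h : AmRel m x y) : toAm m x = toAm m y :=
  RingQuot.mkRingHom_rel h

lemma sum_eA : ∑ i ∈ Finset.range (m + 1), eA m i = 1 := by
  simpa only [map_sum, map_one, eA] using toAm_eq_of_amRel (m := m) AmRel.sum_one

lemma eA_mul_eA (i j : ℕ) : eA m i * eA m j = if i = j then eA m i else 0 := by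
  split_ifs with h
  · subst h; simpa only [eA, map_mul] using toAm_eq_of_amRel (m := m) (AmRel.idem i)
  · simpa only [eA, map_mul, map_zero] using toAm_eq_of_amRel (m := m) (AmRel.orth i j h)

lemma eA_mul_uA_self (i : ℕ) : eA m i * uA m i = uA m i := by
  simpa only [eA, uA, map_mul] using toAm_eq_of_amRel (m := m) (AmRel.u_src i)

lemma uA_mul_eA_succ (i : ℕ) : uA m i * eA m (i + 1) = uA m i := by
  simpa only [eA, uA, map_mul] using toAm_eq_of_amRel (m := m) (AmRel.u_tgt i)

lemma eA_succ_mul_dA (i : ℕ) : eA m (i + 1) * dA m i = dA m i := by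
  simpa only [eA, dA, map_mul] using toAm_eq_of_amRel (m := m) (AmRel.d_src i)

lemma dA_mul_eA_self (i : ℕ) : dA m i * eA m i = dA m i := by
  simpa only [eA, dA, map_mul] using toAm_eq_of_amRel (m := m) (AmRel.d_tgt i)

lemma dA_eq_zero {i : ℕ} (h : m ≤ i) : dA m i = 0 := by
  simpa only [dA, map_zero] using toAm_eq_of_amRel (m := m) (AmRel.d_zero i h)

lemma uA_zero_mul_dA_zero : uA m 0 * dA m 0 = 0 := by
  simpa only [uA, dA, map_mul, map_zero] using toAm_eq_of_amRel (m := m) AmRel.loop0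

lemma uA_succ_mul_dA_succ {i : ℕ} (h : i + 1 < m) :
    uA m (i + 1) * dA m (i + 1) = dA m i * uA m i := by
  simpa only [uA, dA, map_mul] using toAm_eq_of_amRel (m := m) (AmRel.loops i h)

lemma eA_mul_of_eA_mul_self {x : Am m} {j : ℕ} (hx : eA m j * x = x) (i : ℕ) :
    eA m i * x = if i = j then x else 0 := by
  rw [← hx, ← mul_assoc, eA_mul_eA]
  split_ifs <;> simp_all

lemma mul_eA_of_mul_eA_self {x : Am m} {j : ℕ} (hx : x * eA m j = x) (i : ℕ) :
    x * eA m i = if j = i then x else 0 := by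
  rw [← hx, mul_assoc, eA_mul_eA]
  split_ifs <;> simp_all

lemma mul_eq_zero_of_ne {x y : Am m} {i j : ℕ} (hx : x * eA m i = x) (hy : eA m j * y = y)
    (h : i ≠ j) : x * y = 0 := by
  rw [← hx, ← hy, mul_assoc, ← mul_assoc (eA m i), eA_mul_eA, if_neg h, zero_mul, mul_zero]

lemma uA_mul_uA (i j : ℕ) : uA m i * uA m j = 0 := by
  by_cases h : j = i + 1
  · subst h; simpa only [uA, map_mul, map_zero] using toAm_eq_of_amRel (m := m) (AmRel.uu i)
  · exact mul_eq_zero_of_ne (uA_mul_eA_succ i) (eA_mul_uA_self j) (Ne.symm h)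

lemma dA_mul_dA (i j : ℕ) : dA m i * dA m j = 0 := by
  by_cases h : i = j + 1
  · subst h; simpa only [dA, map_mul, map_zero] using toAm_eq_of_amRel (m := m) (AmRel.dd j)
  · exact mul_eq_zero_of_ne (dA_mul_eA_self i) (eA_succ_mul_dA j) h

lemma uA_mul_dA_mul_uA (i j : ℕ) : uA m i * (dA m j * uA m j) = 0 := by
  rw [← mul_assoc]
  obtain rfl | h := eq_or_ne i j
  · rcases i with _ | i
    · rw [uA_zero_mul_dA_zero, zero_mul]
    · obtain hi | hi := Nat.lt_or_ge (i + 1) m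
      · rw [uA_succ_mul_dA_succ hi, mul_assoc, uA_mul_uA, mul_zero]
      · rw [dA_eq_zero hi, mul_zero, zero_mul]
  · rw [mul_eq_zero_of_ne (uA_mul_eA_succ i) (eA_succ_mul_dA j) (by omega), zero_mul]

end Relations

def amBasisDeg {m : ℕ} : Fin (m + 1) ⊕ Fin m ⊕ Fin m ⊕ Fin m → ℕ :=
  Sum.elim (fun _ => 0) (Sum.elim (fun _ => 0) fun _ => 1)

def amGrade (m k : ℕ) : Submodule ℤ (Am m) :=
  span ℤ (amBasisFam m '' {b | amBasisDeg b = k})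

section Grading

variable {m : ℕ}

lemma amBasisFam_mem_amGrade (b : Fin (m + 1) ⊕ Fin m ⊕ Fin m ⊕ Fin m) :
    amBasisFam m b ∈ amGrade m (amBasisDeg b) :=
  subset_span ⟨b, rfl, rfl⟩

lemma eA_mem_amGrade {i : ℕ} (h : i ≤ m) : eA m i ∈ amGrade m 0 :=
  amBasisFam_mem_amGrade (.inl ⟨i, by omega⟩)

lemma uA_mem_amGrade {i : ℕ} (h : i < m) : uA m i ∈ amGrade m 0 :=
  amBasisFam_mem_amGrade (.inr (.inl ⟨i, h⟩))

lemma dA_mem_amGrade {i : ℕ} (h : i < m) : dA m i ∈ amGrade m 1 :=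
  amBasisFam_mem_amGrade (.inr (.inr (.inl ⟨i, h⟩)))

lemma dA_mul_uA_mem_amGrade {i : ℕ} (h : i < m) : dA m i * uA m i ∈ amGrade m 1 :=
  amBasisFam_mem_amGrade (.inr (.inr (.inr ⟨i, h⟩)))

lemma amGrade_eq_bot {k : ℕ} (hk : 2 ≤ k) : amGrade m k = ⊥ := by
  rw [amGrade, span_eq_bot]
  rintro _ ⟨b, hb, rfl⟩
  rcases b with _ | _ | _ | _ <;> simp [amBasisDeg] at hb <;> omega

lemma mul_mem_amGrade_of_forall {a : Am m} {n : ℕ}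
    (h : ∀ b, a * amBasisFam m b ∈ amGrade m (amBasisDeg b + n)) {k : ℕ} {y : Am m}
    (hy : y ∈ amGrade m k) : a * y ∈ amGrade m (k + n) := by
  have : amGrade m k ≤ (amGrade m (k + n)).comap (LinearMap.mulLeft ℤ a) :=
    span_le.2 <| by rintro _ ⟨b, rfl, rfl⟩; exact h b
  exact this hy

lemma eA_mul_mem_amGrade (i : ℕ) {k : ℕ} {y : Am m} (hy : y ∈ amGrade m k) :
    eA m i * y ∈ amGrade m k := by
  refine mul_mem_amGrade_of_forall (n := 0) (fun b => ?_) hy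
  obtain ⟨j, hj⟩ : ∃ j, eA m j * amBasisFam m b = amBasisFam m b := by
    rcases b with j | j | j | j
    · exact ⟨j, by simp [amBasisFam, eA_mul_eA]⟩
    · exact ⟨j, eA_mul_uA_self j⟩
    · exact ⟨j + 1, eA_succ_mul_dA j⟩
    · exact ⟨j + 1, by simp only [amBasisFam, Sum.elim_inr, ← mul_assoc, eA_succ_mul_dA]⟩
  rw [eA_mul_of_eA_mul_self hj]
  split_ifs
  · exact amBasisFam_mem_amGrade b
  · exact zero_mem _

lemma uA_mul_dA_mem_amGrade (i : ℕ) {j : ℕ} (hj : j < m) : uA m i * dA m j ∈ amGrade m 1 := by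
  obtain rfl | h := eq_or_ne i j
  · rcases i with _ | i
    · rw [uA_zero_mul_dA_zero]; exact zero_mem _
    · rw [uA_succ_mul_dA_succ hj]; exact dA_mul_uA_mem_amGrade (by omega)
  · rw [mul_eq_zero_of_ne (uA_mul_eA_succ i) (eA_succ_mul_dA j) (by omega)]; exact zero_mem _

lemma uA_mul_mem_amGrade (i : ℕ) {k : ℕ} {y : Am m} (hy : y ∈ amGrade m k) :
    uA m i * y ∈ amGrade m k := by
  refine mul_mem_amGrade_of_forall (n := 0) (fun b => ?_) hy
  rcases b with ⟨j, hj⟩ | j | ⟨j, hj⟩ | j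
  · rw [amBasisFam, Sum.elim_inl, mul_eA_of_mul_eA_self (uA_mul_eA_succ i)]
    split_ifs with h
    · exact uA_mem_amGrade (by omega)
    · exact zero_mem _
  · rw [amBasisFam, Sum.elim_inr, Sum.elim_inl, uA_mul_uA]; exact zero_mem _
  · exact uA_mul_dA_mem_amGrade i hj
  · simp only [amBasisFam, Sum.elim_inr, uA_mul_dA_mul_uA]; exact zero_mem _

lemma dA_mul_mem_amGrade (i : ℕ) {k : ℕ} {y : Am m} (hy : y ∈ amGrade m k) :
    dA m i * y ∈ amGrade m (k + 1) := by
  refine mul_mem_amGrade_of_forall (fun b => ?_) hy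
  rcases b with ⟨j, hj⟩ | ⟨j, hj⟩ | j | j
  · rw [amBasisFam, Sum.elim_inl, mul_eA_of_mul_eA_self (dA_mul_eA_self i)]
    split_ifs with h
    · obtain hi | hi := Nat.lt_or_ge i m
      · exact dA_mem_amGrade hi
      · rw [dA_eq_zero hi]; exact zero_mem _
    · exact zero_mem _
  · simp only [amBasisFam, Sum.elim_inr, Sum.elim_inl]
    obtain rfl | h := eq_or_ne i j
    · exact dA_mul_uA_mem_amGrade hj
    · rw [mul_eq_zero_of_ne (dA_mul_eA_self i) (eA_mul_uA_self j) h]; exact zero_mem _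
  · simp only [amBasisFam, Sum.elim_inr, Sum.elim_inl, dA_mul_dA]; exact zero_mem _
  · simp only [amBasisFam, Sum.elim_inr, ← mul_assoc, dA_mul_dA, zero_mul]; exact zero_mem _

lemma amBasisFam_mul_mem_amGrade (b : Fin (m + 1) ⊕ Fin m ⊕ Fin m ⊕ Fin m) {k : ℕ} {y : Am m}
    (hy : y ∈ amGrade m k) : amBasisFam m b * y ∈ amGrade m (amBasisDeg b + k) := by
  rcases b with j | j | j | j <;>
    simp only [amBasisFam, amBasisDeg, Sum.elim_inl, Sum.elim_inr]
  · simpa only [zero_add] using eA_mul_mem_amGrade j hy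
  · simpa only [zero_add] using uA_mul_mem_amGrade j hy
  · simpa only [add_comm] using dA_mul_mem_amGrade j hy
  · simpa only [mul_assoc, add_comm] using dA_mul_mem_amGrade j (uA_mul_mem_amGrade j hy)

theorem amGrade_mul {a b : ℕ} {x y : Am m} (hx : x ∈ amGrade m a) (hy : y ∈ amGrade m b) :
    x * y ∈ amGrade m (a + b) := by
  have : amGrade m a ≤ (amGrade m (a + b)).comap (LinearMap.mulRight ℤ y) :=
    span_le.2 <| by rintro _ ⟨c, rfl, rfl⟩; exact amBasisFam_mul_mem_amGrade c hy
  exact this hx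

lemma one_mem_amGrade_zero : (1 : Am m) ∈ amGrade m 0 := by
  rw [← sum_eA]
  exact sum_mem fun i hi => eA_mem_amGrade (Nat.le_of_lt_succ (Finset.mem_range.1 hi))

lemma mul_mem_iSup_amGrade {a : Am m} {n : ℕ}
    (h : ∀ k, ∀ y ∈ amGrade m k, a * y ∈ amGrade m (k + n)) {y : Am m}
    (hy : y ∈ ⨆ k, amGrade m k) : a * y ∈ ⨆ k, amGrade m k := by
  have : ⨆ k, amGrade m k ≤ (⨆ k, amGrade m k).comap (LinearMap.mulLeft ℤ a) :=
    iSup_le fun k y hy => mem_iSup_of_mem (k + n) (h k y hy)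
  exact this hy

theorem iSup_amGrade : ⨆ k, amGrade m k = ⊤ := by
  have hmul (x : FA) : ∀ y ∈ ⨆ k, amGrade m k, toAm m x * y ∈ ⨆ k, amGrade m k := by
    induction x using FreeAlgebra.induction with
    | grade0 r =>
      intro y hy
      rw [eq_intCast, map_intCast, ← zsmul_eq_mul]
      exact smul_mem _ r hy
    | grade1 g =>
      rcases g with i | i | i
      · exact fun _ => mul_mem_iSup_amGrade (n := 0) fun _ _ => eA_mul_mem_amGrade i
      · exact fun _ => mul_mem_iSup_amGrade (n := 0) fun _ _ => uA_mul_mem_amGrade i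
      · exact fun _ => mul_mem_iSup_amGrade fun _ _ => dA_mul_mem_amGrade i
    | mul a b ha hb =>
      intro y hy
      rw [map_mul, mul_assoc]
      exact ha _ (hb y hy)
    | add a b ha hb =>
      intro y hy
      rw [map_add, add_mul]
      exact add_mem (ha y hy) (hb y hy)
  refine eq_top_iff.2 fun a _ => ?_
  obtain ⟨x, rfl⟩ : ∃ x, toAm m x = a := RingQuot.mkRingHom_surjective (AmRel m) a
  simpa using hmul x 1 (mem_iSup_of_mem 0 one_mem_amGrade_zero)

theorem span_amBasisFam : span ℤ (Set.range (amBasisFam m)) = ⊤ :=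
  top_le_iff.1 <| iSup_amGrade (m := m) ▸
    iSup_le fun _ => span_mono (Set.image_subset_range _ _)

end Grading

section Degrees

variable {m : ℕ}

lemma amGrade_zero : amGrade m 0 = span ℤ (Set.range (amDeg0Fam m)) := by
  rw [amGrade]
  congr 1
  ext x
  simp [amBasisFam, amBasisDeg, amDeg0Fam, Sum.exists]

lemma amGrade_one : amGrade m 1 = span ℤ (Set.range (amDeg1Fam m)) := by
  rw [amGrade]
  congr 1
  ext x
  simp [amBasisFam, amBasisDeg, amDeg1Fam, Sum.exists]

lemma linearIndependent_amDeg0Fam : LinearIndependent ℤ (amDeg0Fam m) := by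
  have : amDeg0Fam m = amBasisFam m ∘ Sum.map id Sum.inl := by
    funext b
    rcases b with _ | _ <;> rfl
  rw [this]
  exact linearIndependent_amBasisFam.comp _
    (Sum.map_injective.2 ⟨Function.injective_id, Sum.inl_injective⟩)

lemma linearIndependent_amDeg1Fam : LinearIndependent ℤ (amDeg1Fam m) :=
  linearIndependent_amBasisFam.comp (Sum.inr ∘ Sum.inr) (Sum.inr_injective.comp Sum.inr_injective)

end Degrees

theorem stmt9_general (m : ℕ) :
    LinearIndependent ℤ (amBasisFam m) ∧
    Submodule.span ℤ (Set.range (amBasisFam m)) = ⊤ ∧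
    ∃ G : ℕ → Submodule ℤ (Am m),
      DirectSum.IsInternal G ∧
      (1 : Am m) ∈ G 0 ∧
      (∀ a b : ℕ, ∀ x ∈ G a, ∀ y ∈ G b, x * y ∈ G (a + b)) ∧
      (∀ i : ℕ, i ≤ m → eA m i ∈ G 0) ∧
      (∀ i : ℕ, i < m → uA m i ∈ G 0) ∧
      (∀ i : ℕ, i < m → dA m i ∈ G 1) ∧
      G 0 = Submodule.span ℤ (Set.range (amDeg0Fam m)) ∧
      LinearIndependent ℤ (amDeg0Fam m) ∧
      G 1 = Submodule.span ℤ (Set.range (amDeg1Fam m)) ∧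
      LinearIndependent ℤ (amDeg1Fam m) ∧
      (∀ k : ℕ, 2 ≤ k → G k = ⊥) := by
  have hli := linearIndependent_amBasisFam (m := m)
  have hspan := span_amBasisFam (m := m)
  refine ⟨hli, hspan, amGrade m, hli.isInternal_span_image_preimage hspan amBasisDeg,
    one_mem_amGrade_zero, fun a b x hx y hy => amGrade_mul hx hy, fun i hi => eA_mem_amGrade hi,
    fun i hi => uA_mem_amGrade hi, fun i hi => dA_mem_amGrade hi, amGrade_zero,
    linearIndependent_amDeg0Fam, amGrade_one, linearIndependent_amDeg1Fam,
    fun k hk => amGrade_eq_bot hk⟩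

theorem stmt9 (m : ℕ) (hm : 1 ≤ m) :
    LinearIndependent ℤ (amBasisFam m) ∧
    Submodule.span ℤ (Set.range (amBasisFam m)) = ⊤ ∧
    ∃ G : ℕ → Submodule ℤ (Am m),
      DirectSum.IsInternal G ∧
      (1 : Am m) ∈ G 0 ∧
      (∀ a b : ℕ, ∀ x ∈ G a, ∀ y ∈ G b, x * y ∈ G (a + b)) ∧
      (∀ i : ℕ, i ≤ m → eA m i ∈ G 0) ∧
      (∀ i : ℕ, i < m → uA m i ∈ G 0) ∧
      (∀ i : ℕ, i < m → dA m i ∈ G 1) ∧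
      G 0 = Submodule.span ℤ (Set.range (amDeg0Fam m)) ∧
      LinearIndependent ℤ (amDeg0Fam m) ∧
      G 1 = Submodule.span ℤ (Set.range (amDeg1Fam m)) ∧
      LinearIndependent ℤ (amDeg1Fam m) ∧
      (∀ k : ℕ, 2 ≤ k → G k = ⊥) :=
  stmt9_general m
end
end

section
/- For each 0 ≤ i ≤ m, the left A_m-module P_i is projective (it is a direct summand of A_m, since A_m = ⊕_{j=0}^m P_j as left modules) and indecomposable: P_i is nonzero, and whenever P_i ≅ M ⊕ N as left A_m-modules, one of M, N is zero. -/
/-!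
STATEMENT 11.  For each `0 ≤ i ≤ m`, the left `A_m`-module `P_i = A_m (i)` is projective
and indecomposable: `P_i` is nonzero, and whenever `P_i ≅ M ⊕ N` as left `A_m`-modules,
one of `M`, `N` is zero.
-/

/-!
Since `e_i` is idempotent, `x ↦ x e_i` retracts `A_m` onto `P_i = A_m e_i`, and every
endomorphism of `P_i` is right multiplication by an element of the corner `e_i A_m e_i`; so it
suffices that `0` and `e_i` are the only idempotents of that corner. Spanning `A_m` over `ℤ` by
the paths of length `≤ 1` and the loops `(j+1|j|j+1)` shows that the corner is spanned by `e_i`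
and `c = e_i (i|i-1|i) e_i` (which is `0` for `i = 0`), and `c² = 0`. The character of the simple
module at `i` sends `z e_i + w c` to `z`, so an idempotent has `z ∈ {0, 1}`, and then `c² = 0`
forces `w c = 0`. The same character shows `e_i ≠ 0`.
-/

section Idempotent

variable {R : Type*} [Ring R] {e : R}

theorem IsIdempotentElem.mul_eq_of_mem_span_singleton (he : IsIdempotentElem e) {x : R}
    (hx : x ∈ R ∙ e) : x * e = x := by
  obtain ⟨a, rfl⟩ := Submodule.mem_span_singleton.1 hx
  rw [smul_eq_mul, mul_assoc, he.eq]

theorem IsIdempotentElem.projective_span_singleton (he : IsIdempotentElem e) :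
    Module.Projective R (R ∙ e) :=
  .of_split (R ∙ e).subtype
    ((LinearMap.toSpanSingleton R R e).codRestrict _
      fun x => Submodule.mem_span_singleton.2 ⟨x, rfl⟩)
    (LinearMap.ext fun x => Subtype.ext (he.mul_eq_of_mem_span_singleton x.2))

theorem IsIdempotentElem.coe_end_span_singleton_apply (he : IsIdempotentElem e)
    (f : Module.End R (R ∙ e)) (x : R ∙ e) :
    (f x : R) = x * f ⟨e, Submodule.mem_span_singleton_self e⟩ := by
  have hx : x = (x : R) • ⟨e, Submodule.mem_span_singleton_self e⟩ :=
    Subtype.ext (he.mul_eq_of_mem_span_singleton x.2).symm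
  conv_lhs => rw [hx, map_smul]
  rfl

theorem IsIdempotentElem.end_span_singleton_eq_zero_or_one (he : IsIdempotentElem e)
    (h : ∀ v : R, e * v * e = v → IsIdempotentElem v → v = 0 ∨ v = e)
    {f : Module.End R (R ∙ e)} (hf : IsIdempotentElem f) : f = 0 ∨ f = 1 := by
  set v : R := (f ⟨e, Submodule.mem_span_singleton_self e⟩ : R)
  have hv : ∀ x : R ∙ e, (f x : R) = x * v := he.coe_end_span_singleton_apply f
  have hev : e * v = v := (hv ⟨e, Submodule.mem_span_singleton_self e⟩).symm
  have hve : v * e = v := he.mul_eq_of_mem_span_singleton (f _).2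
  have hvv : IsIdempotentElem v := by
    rw [IsIdempotentElem, ← hv, ← Module.End.mul_apply, hf.eq]
  rcases h v (by rw [hev, hve]) hvv with hv0 | hv_eq
  · exact .inl (LinearMap.ext fun x => Subtype.ext (by rw [hv, hv0, mul_zero]; rfl))
  · exact .inr (LinearMap.ext fun x =>
      Subtype.ext (by rw [hv, hv_eq, he.mul_eq_of_mem_span_singleton x.2]; rfl))

theorem IsIdempotentElem.eq_zero_or_eq_of_eq_or_eq_add_of_mul_self_eq_zero {n v : R}
    (he : IsIdempotentElem e) (hen : e * n = n) (hne : n * e = n) (hn : n * n = 0)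
    (hv : IsIdempotentElem v) (hvn : v = n ∨ v = e + n) : v = 0 ∨ v = e := by
  rcases hvn with rfl | rfl
  · exact .inl (hv.eq.symm.trans hn)
  · have : e + n + n = e + n := by
      conv_rhs => rw [← hv.eq]
      rw [add_mul, mul_add, mul_add, he.eq, hen, hne, hn, add_zero]
    exact .inr (by simpa using this)

end Idempotent

theorem subsingleton_or_subsingleton_of_linearEquiv_prod {R P M N : Type*} [Semiring R]
    [AddCommMonoid P] [Module R P] [AddCommMonoid M] [Module R M] [AddCommMonoid N] [Module R N]
    (h : ∀ f : Module.End R P, IsIdempotentElem f → f = 0 ∨ f = 1) (φ : P ≃ₗ[R] M × N) :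
    Subsingleton M ∨ Subsingleton N := by
  let f : Module.End R P :=
    φ.symm.toLinearMap ∘ₗ LinearMap.inl R M N ∘ₗ LinearMap.fst R M N ∘ₗ φ.toLinearMap
  have hf : IsIdempotentElem f := LinearMap.ext fun x => by simp [f]
  rcases h f hf with hf0 | hf1
  · refine .inl (subsingleton_of_forall_eq 0 fun a => ?_)
    simpa [f] using LinearMap.congr_fun hf0 (φ.symm (a, 0))
  · refine .inr (subsingleton_of_forall_eq 0 fun b => ?_)
    simpa [f, eq_comm] using LinearMap.congr_fun hf1 (φ.symm (0, b))

namespace Am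

variable {m : ℕ}

def duA (m j : ℕ) : Am m := dA m j * uA m j

theorem toAm_eq_of_rel {x y : FA} (h : AmRel m x y) : toAm m x = toAm m y :=
  RingQuot.mkRingHom_rel h

theorem eA_mul_eA (i j : ℕ) : eA m i * eA m j = if i = j then eA m i else 0 := by
  split_ifs with h
  · subst h; exact (map_mul _ _ _).symm.trans (toAm_eq_of_rel (.idem i))
  · rw [eA, eA, ← map_mul, toAm_eq_of_rel (.orth i j h), map_zero]

theorem isIdempotentElem_eA (i : ℕ) : IsIdempotentElem (eA m i) := by
  rw [IsIdempotentElem, eA_mul_eA, if_pos rfl]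

theorem eA_mul_uA_self (k : ℕ) : eA m k * uA m k = uA m k :=
  (map_mul _ _ _).symm.trans (toAm_eq_of_rel (.u_src k))

theorem uA_mul_eA_succ (k : ℕ) : uA m k * eA m (k + 1) = uA m k :=
  (map_mul _ _ _).symm.trans (toAm_eq_of_rel (.u_tgt k))

theorem eA_succ_mul_dA (k : ℕ) : eA m (k + 1) * dA m k = dA m k :=
  (map_mul _ _ _).symm.trans (toAm_eq_of_rel (.d_src k))

theorem dA_mul_eA_self (k : ℕ) : dA m k * eA m k = dA m k :=
  (map_mul _ _ _).symm.trans (toAm_eq_of_rel (.d_tgt k))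

theorem eA_mul_uA (j k : ℕ) : eA m j * uA m k = if j = k then uA m k else 0 := by
  split_ifs with h
  · rw [h, eA_mul_uA_self]
  · rw [← eA_mul_uA_self k, ← mul_assoc, eA_mul_eA, if_neg h, zero_mul]

theorem uA_mul_eA (k j : ℕ) : uA m k * eA m j = if j = k + 1 then uA m k else 0 := by
  split_ifs with h
  · rw [h, uA_mul_eA_succ]
  · rw [← uA_mul_eA_succ k, mul_assoc, eA_mul_eA, if_neg (Ne.symm h), mul_zero]

theorem eA_mul_dA (j k : ℕ) : eA m j * dA m k = if j = k + 1 then dA m k else 0 := by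
  split_ifs with h
  · rw [h, eA_succ_mul_dA]
  · rw [← eA_succ_mul_dA k, ← mul_assoc, eA_mul_eA, if_neg h, zero_mul]

theorem dA_mul_eA (k j : ℕ) : dA m k * eA m j = if j = k then dA m k else 0 := by
  split_ifs with h
  · rw [h, dA_mul_eA_self]
  · rw [← dA_mul_eA_self k, mul_assoc, eA_mul_eA, if_neg (Ne.symm h), mul_zero]

theorem uA_mul_uA (j k : ℕ) : uA m j * uA m k = 0 := by
  by_cases h : k = j + 1
  · rw [h, uA, uA, ← map_mul, toAm_eq_of_rel (.uu j), map_zero]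
  · rw [← uA_mul_eA_succ j, mul_assoc, eA_mul_uA, if_neg (Ne.symm h), mul_zero]

theorem dA_mul_dA (j k : ℕ) : dA m j * dA m k = 0 := by
  by_cases h : j = k + 1
  · rw [h, dA, dA, ← map_mul, toAm_eq_of_rel (.dd k), map_zero]
  · rw [← dA_mul_eA_self j, mul_assoc, eA_mul_dA, if_neg h, mul_zero]

theorem dA_mul_uA (j k : ℕ) : dA m j * uA m k = if j = k then duA m j else 0 := by
  split_ifs with h
  · rw [h, duA]
  · rw [← dA_mul_eA_self j, mul_assoc, eA_mul_uA, if_neg h, mul_zero]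

theorem uA_mul_dA (j k : ℕ) :
    uA m j * dA m k = if j = k ∧ 1 ≤ j ∧ j < m then duA m (j - 1) else 0 := by
  by_cases hjk : j = k
  · subst hjk
    by_cases hj : 1 ≤ j ∧ j < m
    · obtain ⟨i, rfl⟩ : ∃ i, j = i + 1 := ⟨j - 1, by omega⟩
      rw [if_pos ⟨rfl, hj⟩, uA, dA, ← map_mul, toAm_eq_of_rel (.loops i (by omega)), map_mul]
      rfl
    · rw [if_neg (by tauto)]
      rcases Nat.eq_zero_or_pos j with rfl | hj0
      · rw [uA, dA, ← map_mul, toAm_eq_of_rel .loop0, map_zero]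
      · rw [uA, toAm_eq_of_rel (.u_zero j (by omega)), map_zero, zero_mul]
  · rw [if_neg (by tauto), ← uA_mul_eA_succ j, mul_assoc, eA_mul_dA, if_neg (by omega), mul_zero]

theorem eA_mul_duA (j k : ℕ) : eA m j * duA m k = if j = k + 1 then duA m k else 0 := by
  rw [duA, ← mul_assoc, eA_mul_dA]
  split_ifs <;> simp only [zero_mul]

theorem duA_mul_eA (k j : ℕ) : duA m k * eA m j = if j = k + 1 then duA m k else 0 := by
  rw [duA, mul_assoc, uA_mul_eA]
  split_ifs <;> simp only [mul_zero]

theorem uA_mul_duA (j k : ℕ) : uA m j * duA m k = 0 := by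
  rw [duA, ← mul_assoc, uA_mul_dA]
  split_ifs
  · rw [duA, mul_assoc, uA_mul_uA, mul_zero]
  · rw [zero_mul]

theorem dA_mul_duA (j k : ℕ) : dA m j * duA m k = 0 := by
  rw [duA, ← mul_assoc, dA_mul_dA, zero_mul]

theorem duA_mul_duA (j k : ℕ) : duA m j * duA m k = 0 := by
  rw [duA, mul_assoc, uA_mul_duA, mul_zero]

def vertexCharGen (i : ℕ) : AmGen → ℤ
  | .e j => if j = i then 1 else 0
  | _ => 0

def vertexChar {i : ℕ} (hi : i ≤ m) : Am m →+* ℤ :=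
  RingQuot.lift ⟨(FreeAlgebra.lift ℤ (vertexCharGen i)).toRingHom, fun _ _ h => by
    induction h <;> simp [ge, gu, gd, vertexCharGen, hi] <;> omega⟩

theorem vertexChar_toAm {i : ℕ} (hi : i ≤ m) (x : FA) :
    vertexChar hi (toAm m x) = FreeAlgebra.lift ℤ (vertexCharGen i) x :=
  RingQuot.lift_mkRingHom_apply _ _ x

theorem vertexChar_eA {i : ℕ} (hi : i ≤ m) (j : ℕ) :
    vertexChar hi (eA m j) = if j = i then 1 else 0 := by
  rw [eA, vertexChar_toAm, ge, FreeAlgebra.lift_ι_apply]; rfl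

theorem vertexChar_uA {i : ℕ} (hi : i ≤ m) (j : ℕ) : vertexChar hi (uA m j) = 0 := by
  rw [uA, vertexChar_toAm, gu, FreeAlgebra.lift_ι_apply]; rfl

theorem vertexChar_dA {i : ℕ} (hi : i ≤ m) (j : ℕ) : vertexChar hi (dA m j) = 0 := by
  rw [dA, vertexChar_toAm, gd, FreeAlgebra.lift_ι_apply]; rfl

theorem eA_ne_zero {i : ℕ} (hi : i ≤ m) : eA m i ≠ 0 := fun h => by
  simpa [vertexChar_eA hi] using congrArg (vertexChar hi) h

def pathSet (m : ℕ) : Set (Am m) :=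
  Set.range (eA m) ∪ Set.range (uA m) ∪ Set.range (dA m) ∪ Set.range (duA m)

theorem generator_mul_mem_span_pathSet {y : Am m} (hy : y ∈ pathSet m) (j : ℕ) :
    eA m j * y ∈ Submodule.span ℤ (pathSet m) ∧ uA m j * y ∈ Submodule.span ℤ (pathSet m) ∧
      dA m j * y ∈ Submodule.span ℤ (pathSet m) := by
  rcases hy with ((⟨k, rfl⟩ | ⟨k, rfl⟩) | ⟨k, rfl⟩) | ⟨k, rfl⟩ <;>
    simp only [eA_mul_eA, eA_mul_uA, eA_mul_dA, eA_mul_duA, uA_mul_eA, uA_mul_uA, uA_mul_dA,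
      uA_mul_duA, dA_mul_eA, dA_mul_uA, dA_mul_dA, dA_mul_duA] <;>
    refine ⟨?_, ?_, ?_⟩ <;> (try split_ifs) <;>
    first | exact zero_mem _ | exact Submodule.subset_span (by simp [pathSet])

theorem one_eq_sum_eA : (1 : Am m) = ∑ j ∈ Finset.range (m + 1), eA m j := by
  have h := toAm_eq_of_rel (m := m) .sum_one
  rw [map_sum, map_one] at h
  exact h.symm

theorem mul_mem_span_pathSet (x : Am m) {y : Am m} (hy : y ∈ Submodule.span ℤ (pathSet m)) :
    x * y ∈ Submodule.span ℤ (pathSet m) := by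
  obtain ⟨x, rfl⟩ := RingQuot.mkRingHom_surjective (AmRel m) x
  induction x using FreeAlgebra.induction generalizing y with
  | grade0 r =>
    rw [eq_intCast (algebraMap ℤ FA), map_intCast, ← zsmul_eq_mul]
    exact Submodule.smul_mem _ r hy
  | grade1 g =>
    induction hy using Submodule.span_induction with
    | mem y hy =>
      cases g with
      | e j => exact (generator_mul_mem_span_pathSet hy j).1
      | u j => exact (generator_mul_mem_span_pathSet hy j).2.1
      | d j => exact (generator_mul_mem_span_pathSet hy j).2.2
    | zero => rw [mul_zero]; exact zero_mem _
    | add y z _ _ hy hz => rw [mul_add]; exact add_mem hy hz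
    | smul r y _ hy => rw [mul_smul_comm]; exact Submodule.smul_mem _ r hy
  | mul a b ha hb => rw [map_mul, mul_assoc]; exact ha (hb hy)
  | add a b ha hb => rw [map_add, add_mul]; exact add_mem (ha hy) (hb hy)

theorem mem_span_pathSet (x : Am m) : x ∈ Submodule.span ℤ (pathSet m) := by
  have h1 : (1 : Am m) ∈ Submodule.span ℤ (pathSet m) := by
    rw [one_eq_sum_eA]
    exact Submodule.sum_mem _ fun j _ => Submodule.subset_span (by simp [pathSet])
  simpa using mul_mem_span_pathSet x h1

theorem eA_mul_mul_eA_mem_span (i : ℕ) (x : Am m) :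
    eA m i * x * eA m i ∈ Submodule.span ℤ {eA m i, eA m i * loopA m i * eA m i} := by
  induction mem_span_pathSet x using Submodule.span_induction with
  | mem y hy =>
    rcases hy with ((⟨k, rfl⟩ | ⟨k, rfl⟩) | ⟨k, rfl⟩) | ⟨k, rfl⟩
    · rw [eA_mul_eA]
      split_ifs
      · rw [eA_mul_eA, if_pos rfl]; exact Submodule.subset_span (.inl rfl)
      · rw [zero_mul]; exact zero_mem _
    · rw [eA_mul_uA]
      split_ifs with h
      · rw [uA_mul_eA, if_neg (by omega)]; exact zero_mem _
      · rw [zero_mul]; exact zero_mem _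
    · rw [eA_mul_dA]
      split_ifs with h
      · rw [dA_mul_eA, if_neg (by omega)]; exact zero_mem _
      · rw [zero_mul]; exact zero_mem _
    · by_cases h : k = i - 1
      · subst h; exact Submodule.subset_span (.inr rfl)
      · rw [eA_mul_duA, if_neg (by omega), zero_mul]; exact zero_mem _
  | zero => rw [mul_zero, zero_mul]; exact zero_mem _
  | add y z _ _ hy hz => rw [mul_add, add_mul]; exact add_mem hy hz
  | smul r y _ hy => rw [mul_smul_comm, smul_mul_assoc]; exact Submodule.smul_mem _ r hy

theorem eA_mul_loopA_mul_eA_mul_self (i : ℕ) :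
    eA m i * loopA m i * eA m i * (eA m i * loopA m i * eA m i) = 0 := by
  have h : duA m (i - 1) * eA m i * duA m (i - 1) = 0 := by
    rw [duA_mul_eA]
    split_ifs
    exacts [duA_mul_duA _ _, zero_mul _]
  calc eA m i * loopA m i * eA m i * (eA m i * loopA m i * eA m i)
      = eA m i * (duA m (i - 1) * (eA m i * eA m i) * duA m (i - 1)) * eA m i := by
        simp only [loopA, duA, mul_assoc]
    _ = 0 := by rw [(isIdempotentElem_eA i).eq, h, mul_zero, zero_mul]

theorem eq_zero_or_eq_eA_of_isIdempotentElem {i : ℕ} (hi : i ≤ m) {v : Am m}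
    (hv : eA m i * v * eA m i = v) (hvv : IsIdempotentElem v) : v = 0 ∨ v = eA m i := by
  have he := isIdempotentElem_eA (m := m) i
  obtain ⟨z, w, hzw⟩ := Submodule.mem_span_pair.1 (hv ▸ eA_mul_mul_eA_mem_span i v)
  have hχ : vertexChar hi v = z := by
    simp [← hzw, loopA, vertexChar_eA, vertexChar_uA, vertexChar_dA]
  have hz : z = 0 ∨ z = 1 := IsIdempotentElem.iff_eq_zero_or_one.1 (hχ ▸ hvv.map (vertexChar hi))
  refine he.eq_zero_or_eq_of_eq_or_eq_add_of_mul_self_eq_zero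
    (n := w • (eA m i * loopA m i * eA m i)) ?_ ?_ ?_ hvv ?_
  · rw [mul_smul_comm, ← mul_assoc, ← mul_assoc, he.eq]
  · rw [smul_mul_assoc, mul_assoc, he.eq]
  · rw [smul_mul_smul_comm, eA_mul_loopA_mul_eA_mul_self]
    exact smul_zero _
  · rcases hz with rfl | rfl <;> simp [← hzw]

end Am

theorem stmt11_general (m : ℕ) (i : ℕ) (hi : i ≤ m) :
    Module.Projective (Am m) (Pmod m i) ∧
    Nontrivial (Pmod m i) ∧
    (∀ (M N : Type) [AddCommGroup M] [Module (Am m) M] [AddCommGroup N] [Module (Am m) N],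
      Nonempty ((Pmod m i) ≃ₗ[Am m] M × N) → (Subsingleton M ∨ Subsingleton N)) := by
  have he := Am.isIdempotentElem_eA (m := m) i
  refine ⟨he.projective_span_singleton, Submodule.nontrivial_span_singleton (Am.eA_ne_zero hi),
    fun M N _ _ _ _ ⟨φ⟩ => subsingleton_or_subsingleton_of_linearEquiv_prod (fun f hf => ?_) φ⟩
  exact he.end_span_singleton_eq_zero_or_one
    (fun _ => Am.eq_zero_or_eq_eA_of_isIdempotentElem hi) hf

theorem stmt11 (m : ℕ) (hm : 1 ≤ m) (i : ℕ) (hi : i ≤ m) :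
    Module.Projective (Am m) (Pmod m i) ∧
    Nontrivial (Pmod m i) ∧
    (∀ (M N : Type) [AddCommGroup M] [Module (Am m) M] [AddCommGroup N] [Module (Am m) N],
      Nonempty ((Pmod m i) ≃ₗ[Am m] M × N) → (Subsingleton M ∨ Subsingleton N)) :=
  stmt11_general m i hi
end
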